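/- For 2 ≤ α ≤ 5 consider the qutrit state ρ_α := (2/7)·|Ψ⁺₍₃₎⟩⟨Ψ⁺₍₃₎| + (α/7)·σ₊ + ((5−α)/7)·σ₋ on ℂ³ ⊗ ℂ³. Then τ(𝔄(ρ_α)) = 19/21 + (2/21)·√(19 − 15α + 3α²); in particular τ(𝔄(ρ_α)) ≤ 1 if and only if 2 ≤ α ≤ 3. -/

import Mathlib

open scoped Matrix Kronecker BigOperators ComplexOrder
open MeasureTheory

/-- Trace norm of a complex square matrix: `tr √(AᴴA)` (the sum of singular values). -/
noncomputable def traceNorm {n : Type*} [Fintype n] [DecidableEq n] (A : Matrix n n ℂ) : ℝ :=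
  (((Matrix.posSemidef_conjTranspose_mul_self A).1.eigenvectorUnitary.1
      * Matrix.diagonal (((↑) : ℝ → ℂ) ∘ (√·) ∘ (Matrix.posSemidef_conjTranspose_mul_self A).1.eigenvalues)
      * (star (Matrix.posSemidef_conjTranspose_mul_self A).1.eigenvectorUnitary
        : Matrix n n ℂ)).trace).re

/-- The greatest cross norm `‖·‖_γ` of an operator on `ℂ^{d₁} ⊗ ℂ^{d₂}`: the infimum of
`Σᵢ ‖uᵢ‖₁ ‖vᵢ‖₁` over all finite decompositions `T = Σᵢ uᵢ ⊗ vᵢ` into Kronecker products. -/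
noncomputable def gcn {d₁ d₂ : ℕ} (T : Matrix (Fin d₁ × Fin d₂) (Fin d₁ × Fin d₂) ℂ) : ℝ :=
  sInf { r : ℝ | ∃ (n : ℕ) (u : Fin n → Matrix (Fin d₁) (Fin d₁) ℂ)
      (v : Fin n → Matrix (Fin d₂) (Fin d₂) ℂ),
      T = ∑ i, u i ⊗ₖ v i ∧ r = ∑ i, traceNorm (u i) * traceNorm (v i) }

/-- A density matrix: positive semidefinite with trace one. -/
def IsDensityMatrix {n : Type*} [Fintype n] (ρ : Matrix n n ℂ) : Prop :=
  ρ.PosSemidef ∧ ρ.trace = 1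

/-- Separability of a state on `ℂ^{d₁} ⊗ ℂ^{d₂}`: a finite convex-type combination
`ρ = Σᵢ ωᵢ ρᵢ⁽¹⁾ ⊗ ρᵢ⁽²⁾` of Kronecker products of density matrices, with `ωᵢ ≥ 0`. -/
def IsSeparable' {d₁ d₂ : ℕ} (ρ : Matrix (Fin d₁ × Fin d₂) (Fin d₁ × Fin d₂) ℂ) : Prop :=
  ∃ (n : ℕ) (ω : Fin n → ℝ) (ρ₁ : Fin n → Matrix (Fin d₁) (Fin d₁) ℂ)
    (ρ₂ : Fin n → Matrix (Fin d₂) (Fin d₂) ℂ),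
    (∀ i, 0 ≤ ω i) ∧ (∀ i, IsDensityMatrix (ρ₁ i)) ∧ (∀ i, IsDensityMatrix (ρ₂ i)) ∧
    ρ = ∑ i, (ω i : ℂ) • (ρ₁ i ⊗ₖ ρ₂ i)

/-- The realignment map `𝔄`: `𝔄(ρ)_{(i,j),(k,l)} = ρ_{(i,k),(j,l)}`. -/
def realign {d : ℕ} (ρ : Matrix (Fin d × Fin d) (Fin d × Fin d) ℂ) :
    Matrix (Fin d × Fin d) (Fin d × Fin d) ℂ :=
  Matrix.of fun p q => ρ (p.1, q.1) (p.2, q.2)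

/-- `τ(𝔄(ρ))`: the trace norm of the realignment of `ρ`. -/
noncomputable def tauRealign {d : ℕ} (ρ : Matrix (Fin d × Fin d) (Fin d × Fin d) ℂ) : ℝ :=
  traceNorm (realign ρ)

/-- The flip operator `𝔽 = Σ_{i,j} |i⊗j⟩⟨j⊗i|` on `ℂ^d ⊗ ℂ^d`. -/
def flipOp (d : ℕ) : Matrix (Fin d × Fin d) (Fin d × Fin d) ℂ :=
  Matrix.of fun p q => if p.1 = q.2 ∧ p.2 = q.1 then 1 else 0

/-- The Werner state `ρ_f = (1/(d³−d))((d−f) I + (df−1) 𝔽)` on `ℂ^d ⊗ ℂ^d`. -/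
noncomputable def wernerState (d : ℕ) (f : ℝ) : Matrix (Fin d × Fin d) (Fin d × Fin d) ℂ :=
  (((d : ℂ) ^ 3 - d)⁻¹) • (((d : ℂ) - (f : ℂ)) • (1 : Matrix (Fin d × Fin d) (Fin d × Fin d) ℂ)
    + ((d : ℂ) * (f : ℂ) - 1) • flipOp d)

/-- The maximally entangled vector `|Ψ⁺⟩ = (1/√d) Σᵢ |i⊗i⟩` on `ℂ^d ⊗ ℂ^d`. -/
noncomputable def psiPlus (d : ℕ) : Fin d × Fin d → ℂ :=
  fun p => if p.1 = p.2 then ((1 / Real.sqrt d : ℝ) : ℂ) else 0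

/-- The isotropic state `ρ_F = ((1−F)/(d²−1))(I − |Ψ⁺⟩⟨Ψ⁺|) + F |Ψ⁺⟩⟨Ψ⁺|` on `ℂ^d ⊗ ℂ^d`. -/
noncomputable def isotropicState (d : ℕ) (F : ℝ) : Matrix (Fin d × Fin d) (Fin d × Fin d) ℂ :=
  (((1 - F : ℝ) : ℂ) / ((d : ℂ) ^ 2 - 1)) •
      ((1 : Matrix (Fin d × Fin d) (Fin d × Fin d) ℂ)
        - Matrix.vecMulVec (psiPlus d) (star (psiPlus d)))
    + ((F : ℝ) : ℂ) • Matrix.vecMulVec (psiPlus d) (star (psiPlus d))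

/-- The two-qutrit basis vector `|ab⟩`. -/
def ket3 (a b : Fin 3) : Fin 3 × Fin 3 → ℂ := fun p => if p = (a, b) then 1 else 0

/-- The maximally entangled qutrit vector `Ψ⁺₍₃₎ = (|00⟩ + |11⟩ + |22⟩)/√3`. -/
noncomputable def psi3 : Fin 3 × Fin 3 → ℂ :=
  fun p => (if p.1 = p.2 then 1 else 0) / ((Real.sqrt 3 : ℝ) : ℂ)

/-- `σ₊ = (|01⟩⟨01| + |12⟩⟨12| + |20⟩⟨20|)/3`. -/
noncomputable def sigmaPlus : Matrix (Fin 3 × Fin 3) (Fin 3 × Fin 3) ℂ :=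
  (3 : ℂ)⁻¹ • (Matrix.vecMulVec (ket3 0 1) (star (ket3 0 1))
    + Matrix.vecMulVec (ket3 1 2) (star (ket3 1 2))
    + Matrix.vecMulVec (ket3 2 0) (star (ket3 2 0)))

/-- `σ₋ = (|10⟩⟨10| + |21⟩⟨21| + |02⟩⟨02|)/3`. -/
noncomputable def sigmaMinus : Matrix (Fin 3 × Fin 3) (Fin 3 × Fin 3) ℂ :=
  (3 : ℂ)⁻¹ • (Matrix.vecMulVec (ket3 1 0) (star (ket3 1 0))
    + Matrix.vecMulVec (ket3 2 1) (star (ket3 2 1))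
    + Matrix.vecMulVec (ket3 0 2) (star (ket3 0 2)))

/-- The qutrit family `ρ_α = (2/7)|Ψ⁺₍₃₎⟩⟨Ψ⁺₍₃₎| + (α/7)σ₊ + ((5−α)/7)σ₋`. -/
noncomputable def rhoAlpha (α : ℝ) : Matrix (Fin 3 × Fin 3) (Fin 3 × Fin 3) ℂ :=
  (2 / 7 : ℂ) • Matrix.vecMulVec psi3 (star psi3)
    + (((α : ℝ) : ℂ) / 7) • sigmaPlus + ((((5 - α : ℝ)) : ℂ) / 7) • sigmaMinus

namespace TauAux

noncomputable def ss (α : ℝ) : ℝ := Real.sqrt (19 - 15 * α + 3 * α ^ 2)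

lemma ss_sq (α : ℝ) : ss α ^ 2 = 19 - 15 * α + 3 * α ^ 2 :=
  Real.sq_sqrt (by nlinarith [sq_nonneg (2*α-5)])

lemma ss_nonneg (α : ℝ) : 0 ≤ ss α := Real.sqrt_nonneg _

lemma psi3_outer : Matrix.vecMulVec psi3 (star psi3)
    = Matrix.of (fun p q => if p.1 = p.2 ∧ q.1 = q.2 then (1/3 : ℂ) else 0) := by
  have h3 : ((Real.sqrt 3 : ℝ):ℂ) * ((Real.sqrt 3 : ℝ):ℂ) = 3 := by
    rw [← Complex.ofReal_mul, Real.mul_self_sqrt (by norm_num)]; norm_num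
  ext p q
  simp only [Matrix.vecMulVec_apply, psi3, Pi.star_apply, Matrix.of_apply]
  by_cases h1 : p.1 = p.2 <;> by_cases h2 : q.1 = q.2 <;>
    simp [h1, h2, div_mul_div_comm, map_div₀, Complex.conj_ofReal] <;>
    rw [← mul_inv, h3] <;> norm_num

/-- explicit form of the realigned matrix -/
noncomputable def Aexp (α : ℝ) : Matrix (Fin 3 × Fin 3) (Fin 3 × Fin 3) ℂ :=
  Matrix.of fun p q =>
    if p.1 = p.2 ∧ q.1 = q.2 then
      (if p = q then (2/21 : ℂ)
       else if (q.1 : ℕ) = ((p.1 : ℕ) + 1) % 3 then ((α : ℂ)/21) else ((5 - α : ℂ)/21))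
    else if p = q then (2/21 : ℂ) else 0

set_option maxHeartbeats 1000000 in
lemma realign_eq (α : ℝ) : realign (rhoAlpha α) = Aexp α := by
  ext ⟨i,j⟩ ⟨k,l⟩
  simp only [realign, rhoAlpha, psi3_outer, Matrix.add_apply, Matrix.smul_apply,
    Matrix.of_apply, sigmaPlus, sigmaMinus, Matrix.vecMulVec_apply, Pi.star_apply, ket3,
    Aexp, smul_eq_mul]
  fin_cases i <;> fin_cases j <;> fin_cases k <;> fin_cases l <;>
    norm_num [Prod.ext_iff, Fin.ext_iff] <;> ring

abbrev I9 := Fin 3 × Fin 3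

noncomputable def P1 : Matrix I9 I9 ℂ := Matrix.of fun p q => if p = q ∧ ¬ p.1 = p.2 then 1 else 0
noncomputable def P2 : Matrix I9 I9 ℂ := Matrix.of fun p q => if p.1 = p.2 ∧ q.1 = q.2 then (1/3 : ℂ) else 0
noncomputable def P3 : Matrix I9 I9 ℂ := Matrix.of fun p q =>
  if p.1 = p.2 ∧ q.1 = q.2 then (if p = q then 1 else 0) - (1/3 : ℂ) else 0

lemma psd_smul {n : Type*} [Fintype n] {c : ℝ} (hc : 0 ≤ c) {M : Matrix n n ℂ}
    (hM : M.PosSemidef) : ((c : ℂ) • M).PosSemidef := by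
  constructor
  · unfold Matrix.IsHermitian
    rw [Matrix.conjTranspose_smul, hM.1]
    congr 1
    simp [Complex.ext_iff]
  · exact (hM.smul (a := (c : ℂ)) (by exact_mod_cast hc)).2

noncomputable def Sm (α : ℝ) : Matrix I9 I9 ℂ :=
  ((2/21 : ℝ) : ℂ) • P1 + ((1/3 : ℝ) : ℂ) • P2 + ((ss α / 21 : ℝ) : ℂ) • P3

lemma P1_psd : P1.PosSemidef := by
  have h : P1ᴴ * P1 = P1 := by
    ext ⟨i,j⟩ ⟨k,l⟩
    simp only [Matrix.mul_apply, Matrix.conjTranspose_apply, P1, Matrix.of_apply]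
    fin_cases i <;> fin_cases j <;> fin_cases k <;> fin_cases l <;>
      simp [Fintype.sum_prod_type, Fin.sum_univ_three, Prod.ext_iff]
  exact h ▸ Matrix.posSemidef_conjTranspose_mul_self P1

lemma P2_psd : P2.PosSemidef := by
  have h : P2ᴴ * P2 = P2 := by
    ext ⟨i,j⟩ ⟨k,l⟩
    simp only [Matrix.mul_apply, Matrix.conjTranspose_apply, P2, Matrix.of_apply]
    fin_cases i <;> fin_cases j <;> fin_cases k <;> fin_cases l <;>
      simp [Fintype.sum_prod_type, Fin.sum_univ_three, Prod.ext_iff] <;>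
      simp [Complex.ext_iff] <;> norm_num
  exact h ▸ Matrix.posSemidef_conjTranspose_mul_self P2

lemma P3_psd : P3.PosSemidef := by
  have h : P3ᴴ * P3 = P3 := by
    ext ⟨i,j⟩ ⟨k,l⟩
    simp only [Matrix.mul_apply, Matrix.conjTranspose_apply, P3, Matrix.of_apply]
    fin_cases i <;> fin_cases j <;> fin_cases k <;> fin_cases l <;>
      simp [Fintype.sum_prod_type, Fin.sum_univ_three, Prod.ext_iff] <;>
      simp [Complex.ext_iff] <;> norm_num
  exact h ▸ Matrix.posSemidef_conjTranspose_mul_self P3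

set_option maxHeartbeats 2000000 in
lemma sq_eq (α : ℝ) : Sm α * Sm α = (Aexp α)ᴴ * Aexp α := by
  have key : ((ss α : ℝ) : ℂ) * ((ss α : ℝ) : ℂ) = 19 - 15*(α:ℂ) + 3*(α:ℂ)^2 := by
    have h : ss α * ss α = 19 - 15*α + 3*α^2 := by rw [← sq]; exact ss_sq α
    exact_mod_cast h
  have key2 : ((ss α : ℝ) : ℂ) ^ 2 = 19 - 15*(α:ℂ) + 3*(α:ℂ)^2 := by
    rw [sq]; exact key
  ext ⟨i,j⟩ ⟨k,l⟩
  simp only [Matrix.mul_apply, Matrix.conjTranspose_apply, Matrix.add_apply, Matrix.smul_apply,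
    Sm, P1, P2, P3, Aexp, Matrix.of_apply, smul_eq_mul]
  fin_cases i <;> fin_cases j <;> fin_cases k <;> fin_cases l <;>
    simp [Fintype.sum_prod_type, Fin.sum_univ_three, Prod.ext_iff,
      Complex.conj_ofReal, map_ofNat, map_div₀, map_sub] <;>
    (try ring_nf) <;> (try rw [key2]) <;> ring_nf

lemma Sm_psd (α : ℝ) : (Sm α).PosSemidef := by
  refine ((psd_smul (by norm_num) P1_psd).add (psd_smul (by norm_num) P2_psd)).add
    (psd_smul ?_ P3_psd)
  have := ss_nonneg α; linarith

lemma Sm_trace (α : ℝ) : (Sm α).trace = (((19 + 2 * ss α)/21 : ℝ) : ℂ) := by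
  simp [Matrix.trace, Sm, P1, P2, P3, Matrix.diag, Fintype.sum_prod_type, Fin.sum_univ_three,
    Prod.ext_iff]
  push_cast
  ring

open scoped MatrixOrder in
lemma traceNorm_eq_of {n : Type*} [Fintype n] [DecidableEq n] (A S : Matrix n n ℂ)
    (hS : S.PosSemidef) (h : S * S = Aᴴ * A) : traceNorm A = S.trace.re := by
  have hA := Matrix.posSemidef_conjTranspose_mul_self A
  have e1 := hA.1.cfc_eq Real.sqrt
  rw [Matrix.IsHermitian.cfc, Unitary.conjStarAlgAut_apply, ← cfcₙ_eq_cfc,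
    ← CFC.sqrt_eq_real_sqrt _ hA.nonneg, CFC.sqrt_unique h hS.nonneg] at e1
  unfold traceNorm
  exact congrArg (fun M => M.trace.re) e1.symm

end TauAux

/-- The two-qutrit example: `τ(𝔄(ρ_α)) = 19/21 + (2/21)√(19 − 15α + 3α²)`, and
`τ(𝔄(ρ_α)) ≤ 1` iff `2 ≤ α ≤ 3`. -/
theorem tauRealign_rhoAlpha (α : ℝ) (hα : 2 ≤ α ∧ α ≤ 5) :
    tauRealign (rhoAlpha α) = 19 / 21 + 2 / 21 * Real.sqrt (19 - 15 * α + 3 * α ^ 2) ∧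
    (tauRealign (rhoAlpha α) ≤ 1 ↔ 2 ≤ α ∧ α ≤ 3) := by
  open TauAux in
  have heq : traceNorm (realign (rhoAlpha α)) = (Sm α).trace.re := by
    refine traceNorm_eq_of _ _ (Sm_psd α) ?_
    rw [realign_eq, sq_eq]
  have hmain : tauRealign (rhoAlpha α) = 19/21 + 2/21 * Real.sqrt (19 - 15*α + 3*α^2) := by
    rw [tauRealign, heq, Sm_trace, Complex.ofReal_re, TauAux.ss]
    ring
  refine ⟨hmain, ?_⟩
  rw [hmain]
  have hs0 := TauAux.ss_nonneg α
  have hs2 := TauAux.ss_sq α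
  constructor
  · intro h
    have hss : TauAux.ss α ≤ 1 := by rw [TauAux.ss]; linarith
    have h2 : 19 - 15*α + 3*α^2 ≤ 1 := by nlinarith
    constructor <;> nlinarith [hα.1, hα.2]
  · rintro ⟨h2, h3⟩
    have : TauAux.ss α ≤ 1 := by
      rw [show (1:ℝ) = Real.sqrt 1 by simp [Real.sqrt_one]]
      apply Real.sqrt_le_sqrt
      nlinarith
    rw [TauAux.ss] at this
    linarith
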